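/- arXiv:1412.1128 — 3 statements merged into one kernel-verified Lean document; each statement's English description precedes it below -/
import Mathlib

section
/- Let h be the Hénon map with parameters M₁, M₂ ∈ ℝ. Then h has a fixed point at which the Jacobian matrix of h has eigenvalue −1 if and only if 4M₁ = 3(1 − M₂)². (This is the period-doubling bifurcation curve L^{−1} of the Hénon family, corresponding to a fixed point with multiplier −1.) -/
/-- The Hénon map with parameters `M₁, M₂ : ℝ`: `h(x,y) = (y, M₁ + M₂·x − y²)`. -/
def henon (M₁ M₂ : ℝ) (p : ℝ × ℝ) : ℝ × ℝ :=
  (p.2, M₁ + M₂ * p.1 - p.2 ^ 2)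

/-- The Jacobian matrix of the Hénon map at the point `(x,y)`: `[[0, 1], [M₂, −2y]]`. -/
def henonJac (M₂ : ℝ) (p : ℝ × ℝ) : Matrix (Fin 2) (Fin 2) ℝ :=
  !![0, 1; M₂, -2 * p.2]

/-- `μ ∈ ℂ` is an eigenvalue of the real 2×2 matrix `A`
(eigenvalues of real matrices are taken over `ℂ`). -/
def hasEigenvalue (A : Matrix (Fin 2) (Fin 2) ℝ) (μ : ℂ) : Prop :=
  (A.map (fun t : ℝ => (t : ℂ)) - μ • 1).det = 0

/-! A fixed point `(y, y)` has multiplier `−1` exactly when `y = (1 − M₂)/2`; substituting this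
into the fixed-point equation `y² + (1 − M₂) y = M₁` gives `M₁ = 3(1 − M₂)²/4`. -/

theorem hasEigenvalue_iff (A : Matrix (Fin 2) (Fin 2) ℝ) (μ : ℂ) :
    hasEigenvalue A μ ↔ μ ^ 2 - (A.trace : ℂ) * μ + (A.det : ℂ) = 0 := by
  rw [hasEigenvalue, Matrix.det_fin_two, Matrix.trace_fin_two, Matrix.det_fin_two]
  simp only [Matrix.sub_apply, Matrix.map_apply, Matrix.smul_apply, Matrix.one_apply_eq,
    Matrix.one_apply_ne zero_ne_one, Matrix.one_apply_ne one_ne_zero, smul_eq_mul]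
  push_cast
  constructor <;> intro h <;> linear_combination h

theorem henonJac_hasEigenvalue_neg_one_iff (M₂ : ℝ) (p : ℝ × ℝ) :
    hasEigenvalue (henonJac M₂ p) (-1) ↔ 2 * p.2 = 1 - M₂ := by
  have htrace : (henonJac M₂ p).trace = -2 * p.2 := by simp [henonJac, Matrix.trace_fin_two_of]
  have hdet : (henonJac M₂ p).det = -M₂ := by simp [henonJac, Matrix.det_fin_two_of]
  rw [hasEigenvalue_iff, htrace, hdet,
    show (-1 : ℂ) ^ 2 - ((-2 * p.2 : ℝ) : ℂ) * -1 + ((-M₂ : ℝ) : ℂ) =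
        ((1 - 2 * p.2 - M₂ : ℝ) : ℂ) by push_cast; ring,
    Complex.ofReal_eq_zero]
  constructor <;> intro h <;> linarith

theorem henon_eq_self_iff (M₁ M₂ : ℝ) (p : ℝ × ℝ) :
    henon M₁ M₂ p = p ↔ p.1 = p.2 ∧ p.2 ^ 2 + (1 - M₂) * p.2 = M₁ := by
  obtain ⟨x, y⟩ := p
  simp only [henon, Prod.mk.injEq]
  constructor
  · rintro ⟨rfl, h⟩
    exact ⟨rfl, by linarith⟩
  · rintro ⟨rfl, h⟩
    exact ⟨rfl, by linarith⟩

/-- the period-doubling curve `L^{−1}` of the Hénon family. The Hénon map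
has a fixed point at which the Jacobian matrix has eigenvalue `−1` iff `4M₁ = 3(1−M₂)²`. -/
theorem stmt_4 (M₁ M₂ : ℝ) :
    (∃ p : ℝ × ℝ, henon M₁ M₂ p = p ∧ hasEigenvalue (henonJac M₂ p) (-1)) ↔
      4 * M₁ = 3 * (1 - M₂) ^ 2 := by
  simp only [henon_eq_self_iff, henonJac_hasEigenvalue_neg_one_iff]
  constructor
  · rintro ⟨p, ⟨-, hfix⟩, hy⟩
    rw [← hfix, ← hy]
    ring
  · intro h
    refine ⟨((1 - M₂) / 2, (1 - M₂) / 2), ⟨rfl, ?_⟩, by ring⟩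
    linear_combination -h / 4
end

section
/- Let h be the Hénon map with parameters M₁, M₂ ∈ ℝ, and assume −1 < M₂ < 0 and −(1 − M₂)² < 4M₁ < 3(1 − M₂)². Set y₊ = ((M₂ − 1) + √((1 − M₂)² + 4M₁))/2. Then (y₊, y₊) is a fixed point of h, and both complex eigenvalues of the Jacobian matrix of h at (y₊, y₊) have modulus strictly less than 1 (the fixed point is an asymptotically stable sink). -/
theorem abs_lt_one_of_sq_add_mul_add_eq_zero {b c r : ℝ} (hc : c < 1) (hb : |b| < 1 + c)
    (hr : r ^ 2 + b * r + c = 0) : |r| < 1 := by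
  by_contra! hr1
  -- `r ² + c ≥ (1 + c) |r|` is `(|r| - 1) (|r| - c) ≥ 0`, whereas `r ² + c = -b r ≤ |b| |r|`.
  have hbr : r ^ 2 + c ≤ |b| * |r| := by
    rw [← abs_mul]; linarith [neg_abs_le (b * r)]
  nlinarith [sq_abs r]

/-- The Schur–Cohn (Jury) criterion for a real monic quadratic. -/
theorem Complex.norm_lt_one_of_sq_add_mul_add_eq_zero {b c : ℝ} (hc : c < 1)
    (hb : |b| < 1 + c) {μ : ℂ} (hμ : μ ^ 2 + b * μ + c = 0) : ‖μ‖ < 1 := by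
  have hre : μ.re ^ 2 - μ.im ^ 2 + b * μ.re + c = 0 := by
    simpa [pow_two] using congrArg Complex.re hμ
  have him : μ.im * (2 * μ.re + b) = 0 := by
    have := congrArg Complex.im hμ
    simp only [pow_two, Complex.add_im, Complex.mul_im, Complex.ofReal_re,
      Complex.ofReal_im, Complex.zero_im] at this
    linear_combination this
  rcases mul_eq_zero.mp him with him | hsum
  · have hμre : μ = μ.re := Complex.ext rfl (by simpa using him)
    rw [hμre, Complex.norm_real, Real.norm_eq_abs]
    exact abs_lt_one_of_sq_add_mul_add_eq_zero hc hb (by rw [him] at hre; linarith)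
  · -- `2 re μ = -b` turns the real part of the equation into `|μ|² = c`
    have hnormSq : Complex.normSq μ = c := by
      rw [Complex.normSq_apply]; linear_combination -hre + μ.re * hsum
    rw [← sq_lt_one_iff₀ (norm_nonneg μ), Complex.sq_norm, hnormSq]
    exact hc

theorem henonJac_trace (M₂ : ℝ) (p : ℝ × ℝ) : (henonJac M₂ p).trace = -2 * p.2 := by
  simp [henonJac, Matrix.trace_fin_two]

theorem henonJac_det (M₂ : ℝ) (p : ℝ × ℝ) : (henonJac M₂ p).det = -M₂ := by
  simp [henonJac, Matrix.det_fin_two]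

theorem henon_diag_eq_self_iff (M₁ M₂ y : ℝ) :
    henon M₁ M₂ (y, y) = (y, y) ↔ y ^ 2 + (1 - M₂) * y - M₁ = 0 := by
  simp only [henon, Prod.mk.injEq, true_and]
  constructor <;> intro h <;> linear_combination -h

theorem sq_add_mul_sub_eq_zero_of_eq_sqrt {β M₁ y : ℝ} (hD : 0 ≤ β ^ 2 + 4 * M₁)
    (hy : y = (-β + Real.sqrt (β ^ 2 + 4 * M₁)) / 2) : y ^ 2 + β * y - M₁ = 0 := by
  subst hy
  linear_combination (Real.sq_sqrt hD) / 4

/-- for `−1 < M₂ < 0` and `−(1−M₂)² < 4M₁ < 3(1−M₂)²`, the point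
`(y₊, y₊)` with `y₊ = ((M₂−1) + √((1−M₂)² + 4M₁))/2` is a fixed point of the Hénon map and
all complex eigenvalues of the Jacobian matrix there have modulus `< 1` (a sink). -/
theorem stmt_5 (M₁ M₂ : ℝ) (h1 : -1 < M₂) (h2 : M₂ < 0)
    (h3 : -(1 - M₂) ^ 2 < 4 * M₁) (h4 : 4 * M₁ < 3 * (1 - M₂) ^ 2)
    (yp : ℝ) (hyp : yp = ((M₂ - 1) + Real.sqrt ((1 - M₂) ^ 2 + 4 * M₁)) / 2) :
    henon M₁ M₂ (yp, yp) = (yp, yp) ∧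
    ∀ μ : ℂ, hasEigenvalue (henonJac M₂ (yp, yp)) μ → ‖μ‖ < 1 := by
  have hD : 0 < (1 - M₂) ^ 2 + 4 * M₁ := by linarith
  refine ⟨(henon_diag_eq_self_iff M₁ M₂ yp).2
    (sq_add_mul_sub_eq_zero_of_eq_sqrt hD.le (by rw [hyp]; ring)), fun μ hμ => ?_⟩
  have hsqrt_pos : 0 < Real.sqrt ((1 - M₂) ^ 2 + 4 * M₁) := Real.sqrt_pos.2 hD
  have hsqrt_lt : Real.sqrt ((1 - M₂) ^ 2 + 4 * M₁) < 2 * (1 - M₂) :=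
    (Real.sqrt_lt' (by linarith)).2 (by linarith)
  have hb : |2 * yp| < 1 + -M₂ := abs_lt.2 ⟨by linarith, by linarith⟩
  rw [hasEigenvalue_iff, henonJac_trace, henonJac_det] at hμ
  exact Complex.norm_lt_one_of_sq_add_mul_add_eq_zero (by linarith) hb
    (by push_cast at hμ ⊢; linear_combination hμ)
end

section
/- Let M ∈ ℝ, c ∈ ℝ with c ≠ 0, and let H be the map H(x,y) = (x̄, ȳ) with x̄ = M + c·x − y², ȳ = (y + x̄² − M)/c. A point (u,v) with u ≠ v is a fixed point of H if and only if u + v = 1 − c and u·v = (1 − c)² − M. Consequently H has fixed points off the diagonal if and only if 4M > 3(c − 1)² (above the pitchfork curve PF), in which case there are exactly two such points and they form a symmetric couple: (u,v) is a fixed point off the diagonal if and only if (v,u) is. -/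
/-!
Off the diagonal, the difference of the two fixed-point equations of `H` is divisible by
`u - v`, leaving `u + v = 1 - c`; the first equation then yields `u * v = (1 - c)² - M`.
So the off-diagonal fixed points are the ordered pairs of distinct roots of
`t² - (1 - c) t + (1 - c)² - M`, whose discriminant is `4M - 3(c - 1)²`.
-/

/-- The map `H(x,y) = (x̄, ȳ)` with `x̄ = M + c·x − y²` and `ȳ = (y + x̄² − M)/c`,
the explicit form of the implicit system `x̄ = M + c·x − y²`, `c·ȳ = −M + y + x̄²`. -/
noncomputable def Hmap (M c : ℝ) (p : ℝ × ℝ) : ℝ × ℝ :=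
  (M + c * p.1 - p.2 ^ 2,
    (p.2 + (M + c * p.1 - p.2 ^ 2) ^ 2 - M) / c)

/-- The Jacobian matrix (2×2 real derivative matrix) of `Hmap M c` at the point
`(x,y)`, where `x̄ = M + c·x − y²`:
`[[c, −2y], [2x̄, (1 − 4x̄y)/c]]`. -/
noncomputable def HJac (M c : ℝ) (p : ℝ × ℝ) : Matrix (Fin 2) (Fin 2) ℝ :=
  !![c, -2 * p.2;
     2 * (M + c * p.1 - p.2 ^ 2), (1 - 4 * (M + c * p.1 - p.2 ^ 2) * p.2) / c]

lemma sub_sq_eq_of_add_eq_of_mul_eq {R : Type*} [CommRing R] {u v s p : R}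
    (hs : u + v = s) (hp : u * v = p) : (u - v) ^ 2 = s ^ 2 - 4 * p := by
  rw [← hs, ← hp]; ring

lemma eq_or_eq_swap_of_add_eq_of_mul_eq {R : Type*} [CommRing R] [IsDomain R] {a b u v : R}
    (hs : a + b = u + v) (hp : a * b = u * v) : (a, b) = (u, v) ∨ (a, b) = (v, u) := by
  have hroot : (a - u) * (a - v) = 0 := by linear_combination a * hs - hp
  rcases mul_eq_zero.mp hroot with h | h
  · obtain rfl := sub_eq_zero.mp h
    rw [add_left_cancel hs]
    exact Or.inl rfl
  · obtain rfl := sub_eq_zero.mp h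
    rw [add_comm u a] at hs
    rw [add_left_cancel hs]
    exact Or.inr rfl

lemma exists_ne_add_eq_mul_eq_iff {s p : ℝ} :
    (∃ u v : ℝ, u ≠ v ∧ u + v = s ∧ u * v = p) ↔ 4 * p < s ^ 2 := by
  constructor
  · rintro ⟨u, v, huv, hs, hp⟩
    have hpos : 0 < (u - v) ^ 2 := sq_pos_of_ne_zero (sub_ne_zero.mpr huv)
    linarith [sub_sq_eq_of_add_eq_of_mul_eq hs hp]
  · intro hdisc
    have hsqrt_pos : 0 < √(s ^ 2 - 4 * p) := Real.sqrt_pos.mpr (by linarith)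
    have hsqrt_sq : √(s ^ 2 - 4 * p) ^ 2 = s ^ 2 - 4 * p := Real.sq_sqrt (by linarith)
    refine ⟨(s + √(s ^ 2 - 4 * p)) / 2, (s - √(s ^ 2 - 4 * p)) / 2, ?_, by ring, ?_⟩
    · intro h; linarith
    · linear_combination -hsqrt_sq / 4

lemma Hmap_eq_self_iff_of_ne {M c : ℝ} (hc : c ≠ 0) {u v : ℝ} (huv : u ≠ v) :
    Hmap M c (u, v) = (u, v) ↔ u + v = 1 - c ∧ u * v = (1 - c) ^ 2 - M := by
  rw [Hmap, Prod.mk.injEq, div_eq_iff hc]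
  constructor
  · rintro ⟨h1, h2⟩
    rw [h1] at h2
    have hsum : u + v = 1 - c := by
      have hfactor : (u - v) * (u + v - (1 - c)) = 0 := by linear_combination h1 + h2
      linear_combination (mul_eq_zero.mp hfactor).resolve_left (sub_ne_zero.mpr huv)
    exact ⟨hsum, by linear_combination (1 - c + v) * hsum + h1⟩
  · rintro ⟨hsum, hprod⟩
    have h1 : M + c * u - v ^ 2 = u := by linear_combination hprod - (v + 1 - c) * hsum
    exact ⟨h1, by rw [h1]; linear_combination (u + 1 - c) * hsum - hprod⟩

/-- a point `(u,v)` with `u ≠ v` is a fixed point of `H` iff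
`u + v = 1 − c` and `u·v = (1−c)² − M`; `H` has fixed points off the diagonal iff
`4M > 3(c−1)²`, in which case there are exactly two and they form a symmetric couple. -/
theorem stmt_14 (M c : ℝ) (hc : c ≠ 0) :
    (∀ u v : ℝ, u ≠ v →
      (Hmap M c (u, v) = (u, v) ↔ u + v = 1 - c ∧ u * v = (1 - c) ^ 2 - M)) ∧
    ((∃ p : ℝ × ℝ, Hmap M c p = p ∧ p.1 ≠ p.2) ↔ 4 * M > 3 * (c - 1) ^ 2) ∧
    (4 * M > 3 * (c - 1) ^ 2 → ∃ u v : ℝ, u ≠ v ∧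
      {p : ℝ × ℝ | Hmap M c p = p ∧ p.1 ≠ p.2} = {(u, v), (v, u)}) ∧
    (∀ u v : ℝ, u ≠ v →
      (Hmap M c (u, v) = (u, v) ↔ Hmap M c (v, u) = (v, u))) := by
  have hfix (u v : ℝ) (huv : u ≠ v) := Hmap_eq_self_iff_of_ne (M := M) hc huv
  have hdisc : 4 * ((1 - c) ^ 2 - M) < (1 - c) ^ 2 ↔ 4 * M > 3 * (c - 1) ^ 2 := by
    rw [show (c - 1) ^ 2 = (1 - c) ^ 2 by ring]
    constructor <;> intro h <;> linarith
  refine ⟨hfix, ?_, ?_, ?_⟩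
  · rw [← hdisc, ← exists_ne_add_eq_mul_eq_iff]
    constructor
    · rintro ⟨⟨u, v⟩, hfixed, huv⟩
      exact ⟨u, v, huv, (hfix u v huv).mp hfixed⟩
    · rintro ⟨u, v, huv, hsp⟩
      exact ⟨(u, v), (hfix u v huv).mpr hsp, huv⟩
  · intro hM
    obtain ⟨u, v, huv, hs, hp⟩ := exists_ne_add_eq_mul_eq_iff.mpr (hdisc.mpr hM)
    refine ⟨u, v, huv, Set.ext fun ⟨a, b⟩ => ⟨?_, ?_⟩⟩
    · rintro ⟨hfixed, hab⟩
      obtain ⟨has, hap⟩ := (hfix a b hab).mp hfixed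
      exact eq_or_eq_swap_of_add_eq_of_mul_eq (has.trans hs.symm) (hap.trans hp.symm)
    · rintro (h | h) <;> obtain ⟨rfl, rfl⟩ := Prod.mk.inj h
      · exact ⟨(hfix a b huv).mpr ⟨hs, hp⟩, huv⟩
      · exact ⟨(hfix a b huv.symm).mpr ⟨by rwa [add_comm], by rwa [mul_comm]⟩, huv.symm⟩
  · intro u v huv
    rw [hfix u v huv, hfix v u huv.symm, add_comm u v, mul_comm u v]
end
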